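/- Let U₁, U₂ be closed linear subspaces of H with U₁ + U₂ closed and Friedrichs angle cosine c_F := c(U₁, U₂). Let G₁ be a γ₁-BAM with Fix G₁ = U₁ and G₂ a γ₂-BAM with Fix G₂ = U₂, where γ₁, γ₂ ∈ [0,1), and let α ∈ (0,1). Set γ := max{ α√(γ₁² + (1−γ₁²)(1+c_F)/2) + (1−α), α + (1−α)√(γ₂² + (1−γ₂²)(1+c_F)/2) }. Then γ < 1 and the convex combination αG₁ + (1−α)G₂ is a γ-BAM with fixed point set U₁ ∩ U₂. -/

import Mathlib

open Function
open scoped RealInnerProductSpace Pointwise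

/-- `P` is a metric (nearest-point) projection onto `C`. -/
def IsProjOn {H : Type*} [NormedAddCommGroup H] [InnerProductSpace ℝ H]
    (C : Set H) (P : H → H) : Prop :=
  ∀ x, P x ∈ C ∧ ∀ y ∈ C, ‖x - P x‖ ≤ ‖x - y‖

/-- The cosine of the Friedrichs angle between two subspaces. -/
noncomputable def friedrichsCos {H : Type*} [NormedAddCommGroup H]
    [InnerProductSpace ℝ H] (U V : Submodule ℝ H) : ℝ :=
  sSup {r : ℝ | ∃ u ∈ U ⊓ (U ⊓ V)ᗮ, ∃ v ∈ V ⊓ (U ⊓ V)ᗮ,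
    ‖u‖ ≤ 1 ∧ ‖v‖ ≤ 1 ∧ r = |⟪u, v⟫|}

section Helpers

variable {H : Type*} [NormedAddCommGroup H] [InnerProductSpace ℝ H]

lemma IsProjOn.inner_zero {K : Submodule ℝ H} {P : H → H} (hP : IsProjOn (K : Set H) P)
    (x : H) : ∀ w ∈ K, ⟪x - P x, w⟫ = 0 := by
  have h0 : P x ∈ K := (hP x).1
  have h1 : ‖x - P x‖ = ⨅ w : K, ‖x - w‖ := by
    refine le_antisymm (le_ciInf fun w => (hP x).2 w w.2) ?_
    exact ciInf_le ⟨0, by rintro a ⟨w, rfl⟩; exact norm_nonneg _⟩ (⟨P x, h0⟩ : K)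
  exact (Submodule.norm_eq_iInf_iff_real_inner_eq_zero K h0).1 h1

lemma IsProjOn.eq_of {K : Submodule ℝ H} {P : H → H} (hP : IsProjOn (K : Set H) P)
    {x z : H} (hz : z ∈ K) (h : ∀ w ∈ K, ⟪x - z, w⟫ = 0) : P x = z := by
  have hmem : P x - z ∈ K := K.sub_mem (hP x).1 hz
  have h1 := hP.inner_zero x (P x - z) hmem
  have h2 := h (P x - z) hmem
  have h3 : ⟪P x - z, P x - z⟫ = 0 := by
    have h4 : ⟪(x - z) - (x - P x), P x - z⟫ = 0 := by
      rw [inner_sub_left, h2, h1]; ring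
    have h5 : (x - z) - (x - P x) = P x - z := by abel
    rwa [h5] at h4
  have := inner_self_eq_zero.mp h3
  exact (sub_eq_zero.mp this)

lemma friedrichs_bddAbove (U V : Submodule ℝ H) :
    BddAbove {r : ℝ | ∃ u ∈ U ⊓ (U ⊓ V)ᗮ, ∃ v ∈ V ⊓ (U ⊓ V)ᗮ,
      ‖u‖ ≤ 1 ∧ ‖v‖ ≤ 1 ∧ r = |⟪u, v⟫|} := by
  refine ⟨1, ?_⟩
  rintro r ⟨u, hu, v, hv, hu1, hv1, rfl⟩
  calc |⟪u, v⟫| ≤ ‖u‖ * ‖v‖ := abs_real_inner_le_norm u v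
    _ ≤ 1 := by nlinarith [norm_nonneg u, norm_nonneg v]

lemma friedrichsCos_nonneg (U V : Submodule ℝ H) : 0 ≤ friedrichsCos U V := by
  refine le_csSup (friedrichs_bddAbove U V) ?_
  exact ⟨0, zero_mem _, 0, zero_mem _, by simp⟩

lemma friedrichs_inner_le (U V : Submodule ℝ H) {u v : H}
    (hu : u ∈ U ⊓ (U ⊓ V)ᗮ) (hv : v ∈ V ⊓ (U ⊓ V)ᗮ) :
    |⟪u, v⟫| ≤ friedrichsCos U V * (‖u‖ * ‖v‖) := by
  rcases eq_or_ne u 0 with rfl | hu0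
  · simp [friedrichsCos_nonneg U V]
  rcases eq_or_ne v 0 with rfl | hv0
  · simp
  have hun : ‖u‖ ≠ 0 := norm_ne_zero_iff.mpr hu0
  have hvn : ‖v‖ ≠ 0 := norm_ne_zero_iff.mpr hv0
  set u' := ‖u‖⁻¹ • u with hu'
  set v' := ‖v‖⁻¹ • v with hv'
  have hu'mem : u' ∈ U ⊓ (U ⊓ V)ᗮ := Submodule.smul_mem _ _ hu
  have hv'mem : v' ∈ V ⊓ (U ⊓ V)ᗮ := Submodule.smul_mem _ _ hv
  have hu'norm : ‖u'‖ ≤ 1 := by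
    rw [hu', norm_smul, norm_inv, norm_norm, inv_mul_cancel₀ hun]
  have hv'norm : ‖v'‖ ≤ 1 := by
    rw [hv', norm_smul, norm_inv, norm_norm, inv_mul_cancel₀ hvn]
  have hmem : |⟪u', v'⟫| ∈ {r : ℝ | ∃ u ∈ U ⊓ (U ⊓ V)ᗮ, ∃ v ∈ V ⊓ (U ⊓ V)ᗮ,
      ‖u‖ ≤ 1 ∧ ‖v‖ ≤ 1 ∧ r = |⟪u, v⟫|} :=
    ⟨u', hu'mem, v', hv'mem, hu'norm, hv'norm, rfl⟩
  have hle : |⟪u', v'⟫| ≤ friedrichsCos U V := le_csSup (friedrichs_bddAbove U V) hmem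
  have heq : ⟪u', v'⟫ = ‖u‖⁻¹ * (‖v‖⁻¹ * ⟪u, v⟫) := by
    rw [hu', hv', real_inner_smul_left, real_inner_smul_right]
  have habs : |⟪u, v⟫| = ‖u‖ * ‖v‖ * |⟪u', v'⟫| := by
    rw [heq, abs_mul, abs_mul, abs_inv, abs_inv, abs_norm, abs_norm]
    field_simp
  rw [habs]
  have h1 : 0 ≤ ‖u‖ * ‖v‖ := mul_nonneg (norm_nonneg _) (norm_nonneg _)
  nlinarith [hle]

end Helpers

section Fried
variable {H : Type*} [NormedAddCommGroup H] [InnerProductSpace ℝ H]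

lemma submodule_coe_sup (p q : Submodule ℝ H) :
    ((p ⊔ q : Submodule ℝ H) : Set H) = (p : Set H) + (q : Set H) := by
  ext x
  simp only [SetLike.mem_coe, Submodule.mem_sup, Set.mem_add]

lemma aux_div {k t : ℝ} (hk : 0 < k) (h : k * t ≤ k - 1) : t ≤ 1 - 1 / k := by
  have h1 : t ≤ (k - 1) / k := (le_div_iff₀ hk).mpr (by linarith)
  have h2 : (k - 1) / k = 1 - 1 / k := by field_simp
  linarith

lemma strong_sep [CompleteSpace H] (S V : Submodule ℝ H)
    (hS : IsClosed (S : Set H)) (hV : IsClosed (V : Set H))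
    (hdisj : S ⊓ V = ⊥) (hclosed : IsClosed ((S ⊔ V : Submodule ℝ H) : Set H)) :
    ∃ K : ℝ, 1 ≤ K ∧ ∀ (s : S) (v : V), ‖(s : H)‖ ≤ K * ‖(s : H) + (v : H)‖ := by
  set W : Submodule ℝ H := S ⊔ V with hW
  haveI : CompleteSpace S := hS.completeSpace_coe
  haveI : CompleteSpace V := hV.completeSpace_coe
  haveI : CompleteSpace W := hclosed.completeSpace_coe
  have hSW : S ≤ W := le_sup_left
  have hVW : V ≤ W := le_sup_right
  let f : S →L[ℝ] W := (Submodule.inclusion hSW).mkContinuous 1 (fun s => by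
    simp [Submodule.inclusion])
  let g : V →L[ℝ] W := (Submodule.inclusion hVW).mkContinuous 1 (fun v => by
    simp [Submodule.inclusion])
  let T : (S × V) →L[ℝ] W := f.coprod g
  have hT : ∀ (s : S) (v : V), ((T (s, v) : W) : H) = (s : H) + (v : H) := by
    intro s v; rfl
  have hker : LinearMap.ker (T : (S × V) →ₗ[ℝ] W) = ⊥ := by
    rw [LinearMap.ker_eq_bot']
    rintro ⟨s, v⟩ h
    have h0 : (s : H) + (v : H) = 0 := by
      have h1 := Subtype.ext_iff.mp h
      exact (hT s v).symm.trans h1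
    have hsv : (s : H) = -(v : H) := by
      rw [eq_neg_iff_add_eq_zero]; exact h0
    have hsmem : (s : H) ∈ S ⊓ V := by
      refine Submodule.mem_inf.mpr ⟨s.2, ?_⟩
      rw [hsv]; exact V.neg_mem v.2
    have hs0 : (s : H) = 0 := by
      rw [hdisj] at hsmem; exact hsmem
    have hv0 : (v : H) = 0 := by
      have := h0; rw [hs0, zero_add] at this; exact this
    exact Prod.ext (Subtype.ext hs0) (Subtype.ext hv0)
  have hrange : LinearMap.range (T : (S × V) →ₗ[ℝ] W) = ⊤ := by
    rw [LinearMap.range_eq_top]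
    rintro ⟨w, hw⟩
    rcases Submodule.mem_sup.mp hw with ⟨s, hs, v, hv, hsv⟩
    exact ⟨(⟨s, hs⟩, ⟨v, hv⟩), Subtype.ext (by exact (hT ⟨s, hs⟩ ⟨v, hv⟩).trans hsv)⟩
  let e := ContinuousLinearEquiv.ofBijective T hker hrange
  set K₀ : ℝ := ‖(e.symm : W →L[ℝ] (S × V))‖ with hK₀
  refine ⟨max K₀ 1, le_max_right _ _, fun s v => ?_⟩
  have heq : e.symm (T (s, v)) = (s, v) := by
    have := e.symm_apply_apply (s, v)
    rwa [show e (s, v) = T (s, v) from rfl] at this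
  have hle : ‖((s, v) : S × V)‖ ≤ K₀ * ‖T (s, v)‖ := by
    have h3 := (e.symm : W →L[ℝ] (S × V)).le_opNorm (T (s, v))
    simp only [ContinuousLinearEquiv.coe_coe] at h3
    rwa [heq] at h3
  have h1 : ‖(s : H)‖ ≤ ‖((s, v) : S × V)‖ := by
    have := norm_fst_le ((s, v) : S × V)
    simpa using this
  have h2 : ‖T (s, v)‖ = ‖(s : H) + (v : H)‖ := by
    rw [show ‖T (s, v)‖ = ‖((T (s, v) : W) : H)‖ from rfl, hT]
  have hK₀nn : 0 ≤ ‖(s : H) + (v : H)‖ := norm_nonneg _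
  calc ‖(s : H)‖ ≤ K₀ * ‖(s : H) + (v : H)‖ := by rw [← h2]; exact h1.trans hle
    _ ≤ max K₀ 1 * ‖(s : H) + (v : H)‖ :=
        mul_le_mul_of_nonneg_right (le_max_left _ _) hK₀nn

lemma friedrichsCos_lt_one [CompleteSpace H] (U V : Submodule ℝ H)
    (hU : IsClosed (U : Set H)) (hV : IsClosed (V : Set H))
    (hsum : IsClosed ((U : Set H) + (V : Set H))) : friedrichsCos U V < 1 := by
  set M : Submodule ℝ H := U ⊓ V with hM
  have hMclosed : IsClosed (M : Set H) := by
    rw [hM, Submodule.coe_inf]; exact hU.inter hV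
  haveI : CompleteSpace M := hMclosed.completeSpace_coe
  set S : Submodule ℝ H := U ⊓ Mᗮ with hS
  have hSclosed : IsClosed (S : Set H) := by
    rw [hS, Submodule.coe_inf]; exact hU.inter M.isClosed_orthogonal
  -- S ⊔ V = U ⊔ V
  have hsup : S ⊔ V = U ⊔ V := by
    apply le_antisymm
    · exact sup_le ((inf_le_left : S ≤ U).trans le_sup_left) le_sup_right
    · refine sup_le ?_ le_sup_right
      intro x hx
      have hm : ((Submodule.orthogonalProjection M x : M) : H) ∈ M := Submodule.coe_mem _
      have hxm : x - (Submodule.orthogonalProjection M x : M) ∈ Mᗮ :=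
        M.sub_starProjection_mem_orthogonal x
      have hxS : x - (Submodule.orthogonalProjection M x : M) ∈ S :=
        Submodule.mem_inf.mpr ⟨U.sub_mem hx ((inf_le_left : M ≤ U) hm), hxm⟩
      refine Submodule.mem_sup.mpr ⟨x - (Submodule.orthogonalProjection M x : M), hxS,
        (Submodule.orthogonalProjection M x : M), (inf_le_right : M ≤ V) hm, by abel⟩
  have hdisj : S ⊓ V = ⊥ := by
    rw [eq_bot_iff]
    intro x hx
    rcases Submodule.mem_inf.mp hx with ⟨hxS, hxV⟩
    rcases Submodule.mem_inf.mp hxS with ⟨hxU, hxMp⟩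
    have hxM : x ∈ M := Submodule.mem_inf.mpr ⟨hxU, hxV⟩
    have : x = 0 := by
      have h0 := (Submodule.mem_orthogonal M x).mp hxMp x hxM
      exact inner_self_eq_zero.mp h0
    simp [this]
  have hclosedW : IsClosed ((S ⊔ V : Submodule ℝ H) : Set H) := by
    rw [hsup, submodule_coe_sup]; exact hsum
  obtain ⟨K, hK1, hKb⟩ := strong_sep S V hSclosed hV hdisj hclosedW
  have hKpos : 0 < K := lt_of_lt_of_le one_pos hK1
  have hc0 : (0:ℝ) < 1 / (2 * K ^ 2) := by positivity
  have hgoal : friedrichsCos U V ≤ 1 - 1 / (2 * K ^ 2) := by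
    apply Real.sSup_le
    · rintro r ⟨u, hu, v, hv, hu1, hv1, rfl⟩
      have huS : u ∈ S := hu
      have hvV : v ∈ V := (Submodule.mem_inf.mp hv).1
      have hb1 : ‖u‖ ≤ K * ‖u + v‖ := hKb ⟨u, huS⟩ ⟨v, hvV⟩
      have hb2 : ‖u‖ ≤ K * ‖u + -v‖ := hKb ⟨u, huS⟩ (-⟨v, hvV⟩)
      have e1 : ‖u + v‖ ^ 2 = ‖u‖ ^ 2 + 2 * ⟪u, v⟫ + ‖v‖ ^ 2 := norm_add_sq_real u v
      have e2 : ‖u + -v‖ ^ 2 = ‖u‖ ^ 2 - 2 * ⟪u, v⟫ + ‖v‖ ^ 2 := by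
        rw [← sub_eq_add_neg]; exact norm_sub_sq_real u v
      have hn1 : (0:ℝ) ≤ ‖u + v‖ := norm_nonneg _
      have hn2 : (0:ℝ) ≤ ‖u + -v‖ := norm_nonneg _
      have hnu : (0:ℝ) ≤ ‖u‖ := norm_nonneg _
      have hnv : (0:ℝ) ≤ ‖v‖ := norm_nonneg _
      have hsq1 : ‖u‖ ^ 2 ≤ K ^ 2 * ‖u + v‖ ^ 2 := by nlinarith [hb1, hn1, hnu, hKpos]
      have hsq2 : ‖u‖ ^ 2 ≤ K ^ 2 * ‖u + -v‖ ^ 2 := by nlinarith [hb2, hn2, hnu, hKpos]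
      rw [e1] at hsq1
      rw [e2] at hsq2
      have h2K : (0:ℝ) < 2 * K ^ 2 := by positivity
      have hfield : 1 / (2 * K ^ 2) * (2 * K ^ 2) = 1 := by field_simp
      have hK2 : (1:ℝ) ≤ K ^ 2 := by nlinarith
      have hu2 : ‖u‖ ^ 2 ≤ 1 := by nlinarith
      have hv2 : ‖v‖ ^ 2 ≤ 1 := by nlinarith
      have hprod1 : (0:ℝ) ≤ (K ^ 2 - 1) * (1 - ‖u‖ ^ 2) :=
        mul_nonneg (by linarith) (by linarith)
      have hprod2 : (0:ℝ) ≤ K ^ 2 * (1 - ‖v‖ ^ 2) :=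
        mul_nonneg (by positivity) (by linarith)
      have h_high : 2 * K ^ 2 * ⟪u, v⟫ ≤ 2 * K ^ 2 - 1 := by
        linarith [hsq2, hprod1, hprod2]
      have h_low : 2 * K ^ 2 * (-⟪u, v⟫) ≤ 2 * K ^ 2 - 1 := by
        linarith [hsq1, hprod1, hprod2]
      rw [abs_le]
      constructor
      · have := aux_div h2K h_low
        linarith
      · exact aux_div h2K h_high
    · have hhalf : 1 / (2 * K ^ 2) ≤ 1 / 2 := by
        rw [div_le_div_iff₀ (by positivity) (by norm_num)]
        nlinarith
      linarith
  linarith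

end Fried

lemma key_scalar {s d w cF : ℝ} (hd : 0 ≤ d) (hw : 0 ≤ w) (hcf : 0 ≤ cF)
    (h2 : s ≤ d * w) (h6 : w ^ 2 ≤ (1 + cF) * s) : s ≤ (1 + cF) * d ^ 2 := by
  have hs0 : 0 ≤ s := by nlinarith [sq_nonneg w]
  rcases eq_or_lt_of_le hs0 with h | h
  · have hpos : 0 ≤ (1 + cF) * d ^ 2 := by positivity
    linarith
  · have h7 : s * s ≤ (d * w) * (d * w) := mul_self_le_mul_self hs0 h2
    have h8 : d ^ 2 * w ^ 2 ≤ d ^ 2 * ((1 + cF) * s) :=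
      mul_le_mul_of_nonneg_left h6 (sq_nonneg d)
    have h9 : s * s ≤ ((1 + cF) * d ^ 2) * s := by nlinarith [h7, h8]
    exact le_of_mul_le_mul_right h9 h

lemma cross_scalar {a b t cF : ℝ} (h5 : t ≤ cF * (a * b)) (hcf : 0 ≤ cF) :
    2 * t ≤ cF * (a ^ 2 + b ^ 2) := by
  nlinarith [mul_le_mul_of_nonneg_left (sq_nonneg (a - b)) hcf]

lemma A_nonneg {g c : ℝ} (hg : 0 ≤ g) (hg1 : g < 1) (hc : 0 ≤ c) :
    0 ≤ g ^ 2 + (1 - g ^ 2) * ((1 + c) / 2) := by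
  have h1 : (0:ℝ) ≤ 1 - g ^ 2 := by nlinarith
  have h2 : (0:ℝ) ≤ (1 + c) / 2 := by linarith
  nlinarith [mul_nonneg h1 h2, sq_nonneg g]

lemma A_lt_one {g c : ℝ} (hg0 : 0 ≤ g) (hg1 : g < 1) (hc1 : c < 1) :
    g ^ 2 + (1 - g ^ 2) * ((1 + c) / 2) < 1 := by
  nlinarith [mul_lt_mul_of_pos_left (show (1 + c) / 2 < 1 by linarith)
    (show (0:ℝ) < 1 - g ^ 2 by nlinarith)]

lemma comb_lt_one {a s : ℝ} (ha : 0 < a) (hs : s < 1) : a * s + (1 - a) < 1 := by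
  nlinarith [mul_pos ha (show (0:ℝ) < 1 - s by linarith)]

lemma comb_lt_one' {a s : ℝ} (ha : a < 1) (hs : s < 1) : a + (1 - a) * s < 1 := by
  nlinarith [mul_pos (show (0:ℝ) < 1 - a by linarith) (show (0:ℝ) < 1 - s by linarith)]

lemma sq_le_of_le {x y g : ℝ} (hx : 0 ≤ x) (h : x ≤ g * y) : x ^ 2 ≤ g ^ 2 * y ^ 2 := by
  have := mul_self_le_mul_self hx h
  nlinarith [this]

lemma bGsq_aux {gp2 u2 xp2 d2 Gp2 g c : ℝ} (hi : gp2 ≤ g ^ 2 * xp2)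
    (py : d2 = xp2 + u2) (pyG : Gp2 = gp2 + u2) (hu2 : u2 ≤ (1 + c) / 2 * d2)
    (hg0 : 0 ≤ g) (hg1 : g ≤ 1) :
    Gp2 ≤ (g ^ 2 + (1 - g ^ 2) * ((1 + c) / 2)) * d2 := by
  have hxp : xp2 = d2 - u2 := by linarith
  rw [hxp] at hi
  have hg2 : (0:ℝ) ≤ 1 - g ^ 2 := by nlinarith
  have hmul := mul_le_mul_of_nonneg_left hu2 hg2
  nlinarith [hi, hmul]

lemma bGd_aux {gp2 v2 xp2 d2 Gp2 g : ℝ} (hi : gp2 ≤ g ^ 2 * xp2)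
    (py : d2 = xp2 + v2) (pyG : Gp2 = gp2 + v2)
    (hg0 : 0 ≤ g) (hg1 : g ≤ 1) (hxp2 : 0 ≤ xp2) : Gp2 ≤ d2 := by
  have hg2 : g ^ 2 ≤ 1 := by nlinarith
  have hmul := mul_le_mul_of_nonneg_right hg2 hxp2
  nlinarith [hi, hmul]

lemma norm_zero_aux {n g : ℝ} (hn : 0 ≤ n) (h : n ≤ g * n) (hg : g < 1) : n = 0 := by
  by_contra hne
  have hpos : 0 < n := lt_of_le_of_ne hn (Ne.symm hne)
  nlinarith [mul_pos (show (0:ℝ) < 1 - g by linarith) hpos]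

set_option maxHeartbeats 1000000 in
theorem convex_combination_two_bams
    {H : Type*} [NormedAddCommGroup H] [InnerProductSpace ℝ H] [CompleteSpace H]
    (U₁ U₂ : Submodule ℝ H)
    (hU₁ : IsClosed (U₁ : Set H)) (hU₂ : IsClosed (U₂ : Set H))
    (hsum : IsClosed ((U₁ : Set H) + (U₂ : Set H)))
    (G₁ G₂ : H → H) (γ₁ γ₂ : ℝ)
    (hγ₁0 : 0 ≤ γ₁) (hγ₁1 : γ₁ < 1) (hγ₂0 : 0 ≤ γ₂) (hγ₂1 : γ₂ < 1)
    (hFix₁ : Function.fixedPoints G₁ = (U₁ : Set H))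
    (hFix₂ : Function.fixedPoints G₂ = (U₂ : Set H))
    (P₁ P₂ P₁₂ : H → H)
    (hP₁ : IsProjOn (U₁ : Set H) P₁) (hP₂ : IsProjOn (U₂ : Set H) P₂)
    (hP₁₂ : IsProjOn ((U₁ ⊓ U₂ : Submodule ℝ H) : Set H) P₁₂)
    (hPG₁ : ∀ x, P₁ (G₁ x) = P₁ x) (hPG₂ : ∀ x, P₂ (G₂ x) = P₂ x)
    (hineq₁ : ∀ x, ‖G₁ x - P₁ x‖ ≤ γ₁ * ‖x - P₁ x‖)
    (hineq₂ : ∀ x, ‖G₂ x - P₂ x‖ ≤ γ₂ * ‖x - P₂ x‖)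
    (α : ℝ) (hα0 : 0 < α) (hα1 : α < 1)
    (cF γ : ℝ) (hcF : cF = friedrichsCos U₁ U₂)
    (hγ : γ = max
        (α * Real.sqrt (γ₁ ^ 2 + (1 - γ₁ ^ 2) * ((1 + cF) / 2)) + (1 - α))
        (α + (1 - α) * Real.sqrt (γ₂ ^ 2 + (1 - γ₂ ^ 2) * ((1 + cF) / 2))))
    (G : H → H) (hG : ∀ x, G x = α • G₁ x + (1 - α) • G₂ x) :
    γ < 1 ∧
    Function.fixedPoints G = ((U₁ ⊓ U₂ : Submodule ℝ H) : Set H) ∧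
    (∀ x, P₁₂ (G x) = P₁₂ x) ∧
    (∀ x, ‖G x - P₁₂ x‖ ≤ γ * ‖x - P₁₂ x‖) := by
  have hcF0 : 0 ≤ cF := by rw [hcF]; exact friedrichsCos_nonneg U₁ U₂
  have hcF1 : cF < 1 := by rw [hcF]; exact friedrichsCos_lt_one U₁ U₂ hU₁ hU₂ hsum
  have hA₁0 : 0 ≤ γ₁ ^ 2 + (1 - γ₁ ^ 2) * ((1 + cF) / 2) := A_nonneg hγ₁0 hγ₁1 hcF0
  have hA₂0 : 0 ≤ γ₂ ^ 2 + (1 - γ₂ ^ 2) * ((1 + cF) / 2) := A_nonneg hγ₂0 hγ₂1 hcF0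
  have hA₁1 : γ₁ ^ 2 + (1 - γ₁ ^ 2) * ((1 + cF) / 2) < 1 := A_lt_one hγ₁0 hγ₁1 hcF1
  have hA₂1 : γ₂ ^ 2 + (1 - γ₂ ^ 2) * ((1 + cF) / 2) < 1 := A_lt_one hγ₂0 hγ₂1 hcF1
  set A₁ : ℝ := γ₁ ^ 2 + (1 - γ₁ ^ 2) * ((1 + cF) / 2) with hA₁
  set A₂ : ℝ := γ₂ ^ 2 + (1 - γ₂ ^ 2) * ((1 + cF) / 2) with hA₂
  have hs₁0 : 0 ≤ Real.sqrt A₁ := Real.sqrt_nonneg _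
  have hs₂0 : 0 ≤ Real.sqrt A₂ := Real.sqrt_nonneg _
  have hs₁ : Real.sqrt A₁ < 1 := by
    have := Real.sqrt_lt_sqrt hA₁0 hA₁1
    rwa [Real.sqrt_one] at this
  have hs₂ : Real.sqrt A₂ < 1 := by
    have := Real.sqrt_lt_sqrt hA₂0 hA₂1
    rwa [Real.sqrt_one] at this
  have hγlt1 : γ < 1 := by
    rw [hγ]
    apply max_lt
    · exact comb_lt_one hα0 hs₁
    · exact comb_lt_one' hα1 hs₂
  -- basic projection facts
  have hmem₁ : ∀ x, P₁ x ∈ U₁ := fun x => (hP₁ x).1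
  have hmem₂ : ∀ x, P₂ x ∈ U₂ := fun x => (hP₂ x).1
  have hmem₁₂ : ∀ x, P₁₂ x ∈ U₁ ⊓ U₂ := fun x => (hP₁₂ x).1
  have hin₁ : ∀ x, ∀ w ∈ U₁, ⟪x - P₁ x, w⟫ = 0 := fun x => hP₁.inner_zero x
  have hin₂ : ∀ x, ∀ w ∈ U₂, ⟪x - P₂ x, w⟫ = 0 := fun x => hP₂.inner_zero x
  have hin₁₂ : ∀ x, ∀ w ∈ U₁ ⊓ U₂, ⟪x - P₁₂ x, w⟫ = 0 := fun x => hP₁₂.inner_zero x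
  have hG₁perp : ∀ x, ∀ w ∈ U₁, ⟪G₁ x - P₁ x, w⟫ = 0 := by
    intro x w hw
    have := hin₁ (G₁ x) w hw
    rwa [hPG₁] at this
  have hG₂perp : ∀ x, ∀ w ∈ U₂, ⟪G₂ x - P₂ x, w⟫ = 0 := by
    intro x w hw
    have := hin₂ (G₂ x) w hw
    rwa [hPG₂] at this
  have hMle₁ : U₁ ⊓ U₂ ≤ U₁ := inf_le_left
  have hMle₂ : U₁ ⊓ U₂ ≤ U₂ := inf_le_right
  have hGsub : ∀ x, G x - x = α • (G₁ x - x) + (1 - α) • (G₂ x - x) := by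
    intro x; rw [hG x]; module
  have hG₁x_perp : ∀ x, ∀ m ∈ U₁ ⊓ U₂, ⟪G₁ x - x, m⟫ = 0 := by
    intro x m hm
    have e : G₁ x - x = (G₁ x - P₁ x) - (x - P₁ x) := by abel
    rw [e, inner_sub_left, hG₁perp x m (hMle₁ hm), hin₁ x m (hMle₁ hm), sub_zero]
  have hG₂x_perp : ∀ x, ∀ m ∈ U₁ ⊓ U₂, ⟪G₂ x - x, m⟫ = 0 := by
    intro x m hm
    have e : G₂ x - x = (G₂ x - P₂ x) - (x - P₂ x) := by abel
    rw [e, inner_sub_left, hG₂perp x m (hMle₂ hm), hin₂ x m (hMle₂ hm), sub_zero]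
  have hGx_perp : ∀ x, ∀ m ∈ U₁ ⊓ U₂, ⟪G x - x, m⟫ = 0 := by
    intro x m hm
    rw [hGsub x, inner_add_left, real_inner_smul_left, real_inner_smul_left,
      hG₁x_perp x m hm, hG₂x_perp x m hm]
    ring
  have part3 : ∀ x, P₁₂ (G x) = P₁₂ x := by
    intro x
    refine hP₁₂.eq_of (hmem₁₂ x) (fun m hm => ?_)
    have e : G x - P₁₂ x = (G x - x) + (x - P₁₂ x) := by abel
    rw [e, inner_add_left, hGx_perp x m hm, hin₁₂ x m hm, add_zero]
  have part4 : ∀ x, ‖G x - P₁₂ x‖ ≤ γ * ‖x - P₁₂ x‖ := by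
    intro x
    set p := P₁₂ x with hp
    set d := ‖x - p‖ with hd
    have hd0 : 0 ≤ d := norm_nonneg _
    have hpM : p ∈ U₁ ⊓ U₂ := hmem₁₂ x
    have hpU₁ : p ∈ U₁ := hMle₁ hpM
    have hpU₂ : p ∈ U₂ := hMle₂ hpM
    set u : H := P₁ x - p with hu
    set v : H := P₂ x - p with hv
    have huU₁ : u ∈ U₁ := U₁.sub_mem (hmem₁ x) hpU₁
    have hvU₂ : v ∈ U₂ := U₂.sub_mem (hmem₂ x) hpU₂
    have huMp : u ∈ (U₁ ⊓ U₂)ᗮ := by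
      rw [Submodule.mem_orthogonal]
      intro m hm
      rw [real_inner_comm]
      have e : u = (x - p) - (x - P₁ x) := by rw [hu]; abel
      rw [e, inner_sub_left, hin₁₂ x m hm, hin₁ x m (hMle₁ hm), sub_zero]
    have hvMp : v ∈ (U₁ ⊓ U₂)ᗮ := by
      rw [Submodule.mem_orthogonal]
      intro m hm
      rw [real_inner_comm]
      have e : v = (x - p) - (x - P₂ x) := by rw [hv]; abel
      rw [e, inner_sub_left, hin₁₂ x m hm, hin₂ x m (hMle₂ hm), sub_zero]
    -- Pythagoras
    have py1 : d ^ 2 = ‖x - P₁ x‖ ^ 2 + ‖u‖ ^ 2 := by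
      have e : x - p = (x - P₁ x) + u := by rw [hu]; abel
      rw [hd, e, norm_add_sq_real, hin₁ x u huU₁]
      ring
    have py2 : d ^ 2 = ‖x - P₂ x‖ ^ 2 + ‖v‖ ^ 2 := by
      have e : x - p = (x - P₂ x) + v := by rw [hv]; abel
      rw [hd, e, norm_add_sq_real, hin₂ x v hvU₂]
      ring
    have pyG1 : ‖G₁ x - p‖ ^ 2 = ‖G₁ x - P₁ x‖ ^ 2 + ‖u‖ ^ 2 := by
      have e : G₁ x - p = (G₁ x - P₁ x) + u := by rw [hu]; abel
      rw [e, norm_add_sq_real, hG₁perp x u huU₁]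
      ring
    have pyG2 : ‖G₂ x - p‖ ^ 2 = ‖G₂ x - P₂ x‖ ^ 2 + ‖v‖ ^ 2 := by
      have e : G₂ x - p = (G₂ x - P₂ x) + v := by rw [hv]; abel
      rw [e, norm_add_sq_real, hG₂perp x v hvU₂]
      ring
    -- key inequality ‖u‖² + ‖v‖² ≤ (1 + cF) d²
    have hyu : ⟪x - p, u⟫ = ‖u‖ ^ 2 := by
      have e : x - p = (x - P₁ x) + u := by rw [hu]; abel
      rw [e, inner_add_left, hin₁ x u huU₁, real_inner_self_eq_norm_sq, zero_add]
    have hyv : ⟪x - p, v⟫ = ‖v‖ ^ 2 := by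
      have e : x - p = (x - P₂ x) + v := by rw [hv]; abel
      rw [e, inner_add_left, hin₂ x v hvU₂, real_inner_self_eq_norm_sq, zero_add]
    have hcross : |⟪u, v⟫| ≤ cF * (‖u‖ * ‖v‖) := by
      rw [hcF]
      exact friedrichs_inner_le U₁ U₂ (Submodule.mem_inf.mpr ⟨huU₁, huMp⟩)
        (Submodule.mem_inf.mpr ⟨hvU₂, hvMp⟩)
    have key : ‖u‖ ^ 2 + ‖v‖ ^ 2 ≤ (1 + cF) * d ^ 2 := by
      have h1 : ‖u‖ ^ 2 + ‖v‖ ^ 2 = ⟪x - p, u + v⟫ := by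
        rw [inner_add_right, hyu, hyv]
      have h2 : ‖u‖ ^ 2 + ‖v‖ ^ 2 ≤ d * ‖u + v‖ := by
        rw [h1, hd]; exact real_inner_le_norm _ _
      have h3 : ‖u + v‖ ^ 2 = ‖u‖ ^ 2 + 2 * ⟪u, v⟫ + ‖v‖ ^ 2 := norm_add_sq_real u v
      have h4 : 2 * ⟪u, v⟫ ≤ cF * (‖u‖ ^ 2 + ‖v‖ ^ 2) :=
        cross_scalar ((le_abs_self _).trans hcross) hcF0
      have h6 : ‖u + v‖ ^ 2 ≤ (1 + cF) * (‖u‖ ^ 2 + ‖v‖ ^ 2) := by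
        rw [h3]; linarith
      exact key_scalar hd0 (norm_nonneg (u + v)) hcF0 h2 h6
    -- squared versions of the contraction inequalities
    have hi1 : ‖G₁ x - P₁ x‖ ^ 2 ≤ γ₁ ^ 2 * ‖x - P₁ x‖ ^ 2 :=
      sq_le_of_le (norm_nonneg _) (hineq₁ x)
    have hi2 : ‖G₂ x - P₂ x‖ ^ 2 ≤ γ₂ ^ 2 * ‖x - P₂ x‖ ^ 2 :=
      sq_le_of_le (norm_nonneg _) (hineq₂ x)
    have hsplit : G x - p = α • (G₁ x - p) + (1 - α) • (G₂ x - p) := by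
      rw [hG x]; module
    have hnorm_comb : ‖G x - p‖ ≤ α * ‖G₁ x - p‖ + (1 - α) * ‖G₂ x - p‖ := by
      calc ‖G x - p‖ ≤ ‖α • (G₁ x - p)‖ + ‖(1 - α) • (G₂ x - p)‖ := by
            rw [hsplit]; exact norm_add_le _ _
        _ = α * ‖G₁ x - p‖ + (1 - α) * ‖G₂ x - p‖ := by
            rw [norm_smul, norm_smul, Real.norm_eq_abs, Real.norm_eq_abs,
              abs_of_pos hα0, abs_of_pos (by linarith)]
    rcases le_total (‖u‖ ^ 2) (‖v‖ ^ 2) with hcase | hcase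
    · -- ‖u‖² ≤ (1+cF)/2 d²
      have hu2 : ‖u‖ ^ 2 ≤ (1 + cF) / 2 * d ^ 2 := by linarith
      have bG1sq : ‖G₁ x - p‖ ^ 2 ≤ A₁ * d ^ 2 := by
        rw [hA₁]; exact bGsq_aux hi1 py1 pyG1 hu2 hγ₁0 hγ₁1.le
      have bG1 : ‖G₁ x - p‖ ≤ Real.sqrt A₁ * d := by
        apply le_of_pow_le_pow_left₀ two_ne_zero (mul_nonneg hs₁0 hd0)
        rw [mul_pow, Real.sq_sqrt hA₁0]
        exact bG1sq
      have bG2sq : ‖G₂ x - p‖ ^ 2 ≤ d ^ 2 :=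
        bGd_aux hi2 py2 pyG2 hγ₂0 hγ₂1.le (sq_nonneg _)
      have bG2 : ‖G₂ x - p‖ ≤ d := le_of_pow_le_pow_left₀ two_ne_zero hd0 bG2sq
      calc ‖G x - p‖ ≤ α * ‖G₁ x - p‖ + (1 - α) * ‖G₂ x - p‖ := hnorm_comb
        _ ≤ α * (Real.sqrt A₁ * d) + (1 - α) * d := by
            exact add_le_add (mul_le_mul_of_nonneg_left bG1 hα0.le)
              (mul_le_mul_of_nonneg_left bG2 (by linarith))
        _ = (α * Real.sqrt A₁ + (1 - α)) * d := by ring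
        _ ≤ γ * d := by
            apply mul_le_mul_of_nonneg_right _ hd0
            rw [hγ, hA₁]
            exact le_max_left _ _
    · -- ‖v‖² ≤ (1+cF)/2 d²
      have hv2 : ‖v‖ ^ 2 ≤ (1 + cF) / 2 * d ^ 2 := by linarith
      have bG2sq : ‖G₂ x - p‖ ^ 2 ≤ A₂ * d ^ 2 := by
        rw [hA₂]; exact bGsq_aux hi2 py2 pyG2 hv2 hγ₂0 hγ₂1.le
      have bG2 : ‖G₂ x - p‖ ≤ Real.sqrt A₂ * d := by
        apply le_of_pow_le_pow_left₀ two_ne_zero (mul_nonneg hs₂0 hd0)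
        rw [mul_pow, Real.sq_sqrt hA₂0]
        exact bG2sq
      have bG1sq : ‖G₁ x - p‖ ^ 2 ≤ d ^ 2 :=
        bGd_aux hi1 py1 pyG1 hγ₁0 hγ₁1.le (sq_nonneg _)
      have bG1 : ‖G₁ x - p‖ ≤ d := le_of_pow_le_pow_left₀ two_ne_zero hd0 bG1sq
      calc ‖G x - p‖ ≤ α * ‖G₁ x - p‖ + (1 - α) * ‖G₂ x - p‖ := hnorm_comb
        _ ≤ α * d + (1 - α) * (Real.sqrt A₂ * d) := by
            exact add_le_add (mul_le_mul_of_nonneg_left bG1 hα0.le)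
              (mul_le_mul_of_nonneg_left bG2 (by linarith))
        _ = (α + (1 - α) * Real.sqrt A₂) * d := by ring
        _ ≤ γ * d := by
            apply mul_le_mul_of_nonneg_right _ hd0
            rw [hγ, hA₂]
            exact le_max_right _ _
  refine ⟨hγlt1, ?_, part3, part4⟩
  ext x
  simp only [Function.mem_fixedPoints, Function.IsFixedPt, SetLike.mem_coe]
  constructor
  · intro h
    have h4 := part4 x
    rw [h] at h4
    have h5 : ‖x - P₁₂ x‖ = 0 := norm_zero_aux (norm_nonneg _) h4 hγlt1
    have h6 : x = P₁₂ x := by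
      have := norm_eq_zero.mp h5
      exact sub_eq_zero.mp this
    rw [h6]
    exact hmem₁₂ x
  · intro hx
    have h1 : G₁ x = x := by
      have : x ∈ Function.fixedPoints G₁ := by
        rw [hFix₁]; exact hMle₁ hx
      exact this
    have h2 : G₂ x = x := by
      have : x ∈ Function.fixedPoints G₂ := by
        rw [hFix₂]; exact hMle₂ hx
      exact this
    rw [hG x, h1, h2]
    module
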